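/- arXiv:1303.7091 — 5 statements merged into one kernel-verified Lean document; each statement's English description precedes it below -/
import Mathlib

section
/- Let n ≥ 3 and let F ∈ M_n(ℂ) satisfy F·F̄ = I_n (where F̄ denotes the entrywise complex conjugate of F). Then tr(F F*) > 2, where F* is the conjugate transpose of F. -/
open Matrix

/-!
`n = tr(F F̄)`, and `tr(A Ā) ≤ tr(A Aᴴ)` for every square matrix `A` (Cauchy–Schwarz for the
Frobenius inner product, as `tr(A Ā) = ⟪Aᵀ, A⟫` and `‖Aᵀ‖ = ‖A‖`); hence `tr(F F*) ≥ n ≥ 3`.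
-/

open scoped ComplexOrder in
-- `tr((A - Aᵀ)(A - Aᵀ)ᴴ) ≥ 0` expands to `2 tr(A Aᴴ) - 2 tr(A Ā) ≥ 0`.
theorem Matrix.re_trace_mul_map_star_le {𝕜 n : Type*} [RCLike 𝕜] [Fintype n]
    (A : Matrix n n 𝕜) :
    RCLike.re (A * A.map star).trace ≤ RCLike.re (A * Aᴴ).trace := by
  have hcross : (Aᵀ * Aᴴ).trace = (A * A.map star).trace := by
    rw [← trace_transpose, transpose_mul, trace_mul_comm]; rfl
  have hsquare : (Aᵀ * A.map star).trace = (A * Aᴴ).trace := by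
    rw [← trace_transpose, transpose_mul, trace_mul_comm]; rfl
  have hexpand : ((A - Aᵀ) * (A - Aᵀ)ᴴ).trace =
      2 * ((A * Aᴴ).trace - (A * A.map star).trace) := by
    rw [conjTranspose_sub, transpose_conjTranspose, sub_mul, mul_sub, mul_sub, trace_sub,
      trace_sub, trace_sub, hcross, hsquare]
    ring
  have hnonneg := RCLike.nonneg_iff.mp (posSemidef_self_mul_conjTranspose (A - Aᵀ)).trace_nonneg
  rw [hexpand, RCLike.ofNat_mul_re, map_sub] at hnonneg
  linarith [hnonneg.1]

theorem stmt_0 {n : ℕ} (hn : 3 ≤ n) (F : Matrix (Fin n) (Fin n) ℂ)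
    (hF : F * F.map (starRingEnd ℂ) = 1) :
    2 < (Matrix.trace (F * Fᴴ)).re := by
  have hle := F.re_trace_mul_map_star_le
  rw [show F.map star = F.map (starRingEnd ℂ) from rfl, hF, trace_one] at hle
  have hn3 : (3 : ℝ) ≤ n := by exact_mod_cast hn
  simp only [Fintype.card_fin, RCLike.natCast_re, RCLike.re_to_complex] at hle
  linarith
end

section
/- Let n ≥ 3 and let F ∈ M_n(ℂ) satisfy F·F̄ = -I_n. Then n is even and tr(F F*) > 2. -/
/-! Taking determinants in `F * conj F = -1` gives `|det F|² = (-1)ⁿ`, so `n` is even.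
Taking traces instead gives `n = |∑ F_ik conj F_ki| ≤ ∑ |F_ik|² = re tr (F * Fᴴ)`,
by AM-GM on each pair of entries `F_ik`, `F_ki`; and `n ≥ 3`. -/

open Matrix ComplexConjugate

namespace Matrix

variable {ι 𝕜 : Type*} [Fintype ι] [RCLike 𝕜]

lemma re_trace_mul_conjTranspose_self (F : Matrix ι ι 𝕜) :
    RCLike.re (F * Fᴴ).trace = ∑ i, ∑ k, ‖F i k‖ ^ 2 := by
  simp only [trace, diag, mul_apply, conjTranspose_apply, RCLike.star_def, RCLike.mul_conj,
    map_sum]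
  norm_cast

lemma norm_trace_mul_map_conj_le (F : Matrix ι ι 𝕜) :
    ‖(F * F.map conj).trace‖ ≤ RCLike.re (F * Fᴴ).trace := by
  calc ‖(F * F.map conj).trace‖ ≤ ∑ i, ∑ k, ‖F i k‖ * ‖F k i‖ := by
        simp only [trace, diag, mul_apply, map_apply]
        refine (norm_sum_le _ _).trans (Finset.sum_le_sum fun i _ => (norm_sum_le _ _).trans ?_)
        simp
    _ ≤ ∑ i, ∑ k, (‖F i k‖ ^ 2 + ‖F k i‖ ^ 2) / 2 := by
        gcongr with i _ k _
        nlinarith [two_mul_le_add_sq ‖F i k‖ ‖F k i‖]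
    _ = ∑ i, ∑ k, ‖F i k‖ ^ 2 := by
        simp only [add_div, Finset.sum_add_distrib]
        rw [Finset.sum_comm (f := fun i k => ‖F k i‖ ^ 2 / 2)]
        simp only [← Finset.sum_add_distrib, add_halves]
    _ = RCLike.re (F * Fᴴ).trace := (re_trace_mul_conjTranspose_self F).symm

variable [DecidableEq ι] {F : Matrix ι ι 𝕜}

lemma card_le_re_trace_mul_conjTranspose_self (hF : F * F.map conj = -1) :
    (Fintype.card ι : ℝ) ≤ RCLike.re (F * Fᴴ).trace := by
  simpa [hF] using norm_trace_mul_map_conj_le F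

lemma even_card_of_mul_map_conj_eq_neg_one (hF : F * F.map conj = -1) :
    Even (Fintype.card ι) := by
  have hdet : ((‖F.det‖ ^ 2 : ℝ) : 𝕜) = (-1) ^ Fintype.card ι := by
    rw [RCLike.ofReal_pow, ← RCLike.mul_conj, RingHom.map_det, RingHom.mapMatrix_apply, ← det_mul,
      hF, det_neg, det_one, mul_one]
  by_contra hodd
  rw [Nat.not_even_iff_odd.mp hodd |>.neg_one_pow] at hdet
  have hre := congrArg RCLike.re hdet
  simp only [RCLike.ofReal_re, map_neg, RCLike.one_re] at hre
  linarith [sq_nonneg ‖F.det‖]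

end Matrix

theorem stmt_1 {n : ℕ} (hn : 3 ≤ n) (F : Matrix (Fin n) (Fin n) ℂ)
    (hF : F * F.map (starRingEnd ℂ) = -1) :
    Even n ∧ 2 < (Matrix.trace (F * Fᴴ)).re := by
  have hcard := card_le_re_trace_mul_conjTranspose_self hF
  rw [Fintype.card_fin, RCLike.re_to_complex] at hcard
  have hn' : (3 : ℝ) ≤ n := by exact_mod_cast hn
  exact ⟨by simpa using even_card_of_mul_map_conj_eq_neg_one hF, by linarith⟩
end

section
/- Let E = (E_1,…,E_n) be a multimatrix and A_E = ⊕_λ M_{d_λ}(ℂ) with measure tr_E. Then (A_E, tr_E) is homogeneous (i.e., φ̃ = λ_A·φ for some nonzero scalar λ_A, where φ̃ is defined from the Casimir element as above) if and only if tr(E_1) = tr(E_2) = ⋯ = tr(E_n) ≠ 0. -/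
/-!
In the block `M_{d_λ}` the Casimir sum collapses, because `e_{kl} e_{rk} = δ_{lr} e_{kk}` and
`∑_k e_{kk} = 1`, to `tr(E_λ) • a_λ`. Hence `φ̃` is the trace form of `φ` with the block `λ`
reweighted by `tr(E_λ)`. Each block's trace form is a nonzero functional (the inverse of `E_λ`
is nonzero), so testing on single blocks shows that `φ̃ = c φ` forces `tr(E_λ) = c` for all `λ`.
-/

open Matrix

namespace Matrix

variable {m R : Type*} [Fintype m] [DecidableEq m] [CommRing R]

theorem exists_trace_mul_ne_zero {B : Matrix m m R} (hB : B ≠ 0) : ∃ x, trace (B * x) ≠ 0 := by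
  obtain ⟨p, q, hpq⟩ : ∃ p q, B p q ≠ 0 := by
    by_contra! h
    exact hB (ext h)
  exact ⟨single q p 1, by simpa [trace_mul_single] using hpq⟩

theorem ne_zero_of_isUnit_det [Nonempty m] [Nontrivial R] {A : Matrix m m R}
    (h : IsUnit A.det) : A ≠ 0 := by
  rintro rfl
  simp at h

theorem sum_smul_mul_single_mul_single (E a : Matrix m m R) :
    ∑ k, ∑ l, ∑ r, E l r • (a * single k l 1 * single r k 1) = trace E • a := by
  have collapse_r : ∀ k l, ∑ r, E l r • (a * single k l 1 * single r k 1) =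
      E l l • (a * single k k 1) := fun k l => by
    rw [Finset.sum_eq_single l (fun r _ hr => by simp [mul_assoc, Ne.symm hr]) (by simp),
      mul_assoc, single_mul_single_same, one_mul]
  simp only [collapse_r]
  rw [Finset.sum_comm, trace, Finset.sum_smul]
  refine Finset.sum_congr rfl fun l _ => ?_
  rw [← Finset.smul_sum, ← Finset.mul_sum, sum_single_one, mul_one, diag_apply]

end Matrix

section BlockTraceForm

variable {ι : Type*} [Fintype ι] [DecidableEq ι] {m : ι → Type*} [∀ i, Fintype (m i)]
  [∀ i, DecidableEq (m i)] {R : Type*} [CommRing R]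

def blockTraceForm (B a : ∀ i, Matrix (m i) (m i) R) : R := ∑ i, trace (B i * a i)

theorem blockTraceForm_pi_single (B : ∀ i, Matrix (m i) (m i) R) (j : ι)
    (x : Matrix (m j) (m j) R) : blockTraceForm B (Pi.single j x) = trace (B j * x) := by
  rw [blockTraceForm, Finset.sum_eq_single j (by simp +contextual [Pi.single_eq_of_ne]) (by simp),
    Pi.single_eq_same]

theorem sum_casimir_blockTraceForm (E B a : ∀ i, Matrix (m i) (m i) R) :
    ∑ j, ∑ k, ∑ l, ∑ r, E j l r *
      blockTraceForm B (a * Pi.single j (single k l 1) * Pi.single j (single r k 1)) =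
    blockTraceForm (fun j => trace (E j) • B j) a := by
  refine Finset.sum_congr rfl fun j _ => ?_
  have pi_single_mul : ∀ k l r, a * Pi.single j (single k l 1) * Pi.single j (single r k 1) =
      Pi.single j (a j * single k l 1 * single r k 1) := fun k l r => by
    rw [← Pi.single_mul_right, ← Pi.single_mul_right, Pi.single_eq_same]
  simp only [pi_single_mul, blockTraceForm_pi_single]
  calc ∑ k, ∑ l, ∑ r, E j l r * trace (B j * (a j * single k l 1 * single r k 1))
      = trace (B j * ∑ k, ∑ l, ∑ r, E j l r • (a j * single k l 1 * single r k 1)) := by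
        simp only [Matrix.mul_sum, trace_sum, Matrix.mul_smul, trace_smul, smul_eq_mul]
    _ = trace (trace (E j) • B j * a j) := by
        rw [sum_smul_mul_single_mul_single, Matrix.mul_smul, Matrix.smul_mul]

theorem exists_ne_zero_weighted_blockTraceForm_eq_iff [Nonempty ι] [IsDomain R] (t : ι → R)
    (B : ∀ i, Matrix (m i) (m i) R) (hB : ∀ i, B i ≠ 0) :
    (∃ c : R, c ≠ 0 ∧ ∀ a, blockTraceForm (fun i => t i • B i) a = c * blockTraceForm B a) ↔
      (∀ i j, t i = t j) ∧ ∀ i, t i ≠ 0 := by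
  constructor
  · rintro ⟨c, hc, h⟩
    have ht : ∀ i, t i = c := fun i => by
      obtain ⟨x, hx⟩ := exists_trace_mul_ne_zero (hB i)
      have := h (Pi.single i x)
      rw [blockTraceForm_pi_single, blockTraceForm_pi_single, Matrix.smul_mul, trace_smul,
        smul_eq_mul] at this
      exact mul_right_cancel₀ hx this
    exact ⟨fun i j => (ht i).trans (ht j).symm, fun i => ht i ▸ hc⟩
  · rintro ⟨heq, hne⟩
    obtain ⟨i₀⟩ := ‹Nonempty ι›
    refine ⟨t i₀, hne i₀, fun a => ?_⟩
    rw [blockTraceForm, blockTraceForm, Finset.mul_sum]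
    exact Finset.sum_congr rfl fun i _ => by rw [Matrix.smul_mul, trace_smul, smul_eq_mul, heq i i₀]

end BlockTraceForm

/-- `(A_E, tr_E)` is homogeneous (`φ̃ = λ_A·φ` for some nonzero scalar `λ_A`) if and
only if `tr(E_1) = ⋯ = tr(E_n) ≠ 0`. -/
theorem stmt_12 {n : ℕ} (hn : 0 < n) (d : Fin n → ℕ) (hd : ∀ lam, 0 < d lam)
    (E : ∀ lam : Fin n, Matrix (Fin (d lam)) (Fin (d lam)) ℂ)
    (hE : ∀ lam, IsUnit (E lam).det)
    (phi : (∀ lam : Fin n, Matrix (Fin (d lam)) (Fin (d lam)) ℂ) → ℂ)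
    (hphi : ∀ a, phi a = ∑ lam, Matrix.trace (((E lam)⁻¹)ᵀ * a lam))
    (phitilde : (∀ lam : Fin n, Matrix (Fin (d lam)) (Fin (d lam)) ℂ) → ℂ)
    (hphitilde : ∀ a, phitilde a =
      ∑ mu, ∑ k' : Fin (d mu), ∑ l' : Fin (d mu), ∑ r : Fin (d mu),
        E mu l' r * phi (a * Pi.single mu (Matrix.single k' l' 1) *
          Pi.single mu (Matrix.single r k' 1))) :
    (∃ c : ℂ, c ≠ 0 ∧ ∀ a, phitilde a = c * phi a) ↔
      ((∀ lam mu, Matrix.trace (E lam) = Matrix.trace (E mu)) ∧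
        ∀ lam, Matrix.trace (E lam) ≠ 0) := by
  have : Nonempty (Fin n) := ⟨⟨0, hn⟩⟩
  have hB : ∀ lam, ((E lam)⁻¹)ᵀ ≠ 0 := fun lam => by
    have : Nonempty (Fin (d lam)) := ⟨⟨0, hd lam⟩⟩
    exact ne_zero_of_isUnit_det (isUnit_det_transpose _ (isUnit_nonsing_inv_det _ (hE lam)))
  obtain rfl : phi = blockTraceForm fun lam => ((E lam)⁻¹)ᵀ := funext hphi
  obtain rfl : phitilde = blockTraceForm fun lam => trace (E lam) • ((E lam)⁻¹)ᵀ :=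
    funext fun a => by rw [hphitilde, sum_casimir_blockTraceForm]
  exact exists_ne_zero_weighted_blockTraceForm_eq_iff _ _ hB
end

section
/- Let W be a finite-dimensional vector space with linear maps e : W⊗W → ℂ, δ : ℂ → W⊗W, C : W⊗W → W and D := (id ⊗ C)(δ ⊗ id) satisfying (e ⊗ id)(id ⊗ δ) = id, (id ⊗ e)(δ ⊗ id) = id, CD = id, eδ = τ·id, Cδ = 0, eD = 0, e(C ⊗ id) = e(id ⊗ C), (id ⊗ C)(δ ⊗ id) = (C ⊗ id)(id ⊗ δ), and the cubic relations (id ⊗ C)(D ⊗ id) = (1-τ)^{-1} id + (τ-1)^{-1} δe + DC and C(id ⊗ C) = (1-τ)^{-1}(id ⊗ e) + (τ-1)^{-1}(e ⊗ id) + C(C ⊗ id), with τ ≠ 1. Define on A := ℂ ⊕ W the product (λ,v)(μ,w) = (λμ + (τ-1)^{-1}e(v⊗w), λw + μv + C(v⊗w)) with unit 1_A = (1,0). Then this product is associative. -/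
open scoped TensorProduct
open TensorProduct LinearMap

/-- The product on `A = ℂ ⊕ W` built from `e`, `C` and `τ`:
`(λ,v)(μ,w) = (λμ + (τ-1)⁻¹ e(v⊗w), λw + μv + C(v⊗w))`. -/
noncomputable def mulA {W : Type*} [AddCommGroup W] [Module ℂ W]
    (e : W ⊗[ℂ] W →ₗ[ℂ] ℂ) (C : W ⊗[ℂ] W →ₗ[ℂ] W) (τ : ℂ)
    (x y : ℂ × W) : ℂ × W :=
  (x.1 * y.1 + (τ - 1)⁻¹ * e (x.2 ⊗ₜ[ℂ] y.2),
    x.1 • y.2 + y.1 • x.2 + C (x.2 ⊗ₜ[ℂ] y.2))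

/-- Under the listed duality, fusion and cubic relations (with `τ ≠ 1`), the product
on `A = ℂ ⊕ W` is associative. -/
theorem stmt_15 {W : Type*} [AddCommGroup W] [Module ℂ W] [FiniteDimensional ℂ W]
    (e : W ⊗[ℂ] W →ₗ[ℂ] ℂ) (δ : ℂ →ₗ[ℂ] W ⊗[ℂ] W)
    (C : W ⊗[ℂ] W →ₗ[ℂ] W) (D : W →ₗ[ℂ] W ⊗[ℂ] W) (τ : ℂ) (hτ : τ ≠ 1)
    -- (e ⊗ id)(id ⊗ δ) = id_W
    (h1 : (TensorProduct.lid ℂ W).toLinearMap ∘ₗ TensorProduct.map e LinearMap.id ∘ₗ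
        (TensorProduct.assoc ℂ W W W).symm.toLinearMap ∘ₗ lTensor W δ ∘ₗ
        (TensorProduct.rid ℂ W).symm.toLinearMap = LinearMap.id)
    -- (id ⊗ e)(δ ⊗ id) = id_W
    (h2 : (TensorProduct.rid ℂ W).toLinearMap ∘ₗ TensorProduct.map LinearMap.id e ∘ₗ
        (TensorProduct.assoc ℂ W W W).toLinearMap ∘ₗ rTensor W δ ∘ₗ
        (TensorProduct.lid ℂ W).symm.toLinearMap = LinearMap.id)
    -- D = (id ⊗ C)(δ ⊗ id)
    (hD : D = lTensor W C ∘ₗ (TensorProduct.assoc ℂ W W W).toLinearMap ∘ₗ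
        rTensor W δ ∘ₗ (TensorProduct.lid ℂ W).symm.toLinearMap)
    (hCD : C ∘ₗ D = LinearMap.id)
    (heδ : e ∘ₗ δ = τ • LinearMap.id)
    (hCδ : C ∘ₗ δ = 0)
    (heD : e ∘ₗ D = 0)
    -- e(C ⊗ id) = e(id ⊗ C)
    (h3 : e ∘ₗ rTensor W C =
      e ∘ₗ lTensor W C ∘ₗ (TensorProduct.assoc ℂ W W W).toLinearMap)
    -- (id ⊗ C)(δ ⊗ id) = (C ⊗ id)(id ⊗ δ)
    (h4 : lTensor W C ∘ₗ (TensorProduct.assoc ℂ W W W).toLinearMap ∘ₗ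
        rTensor W δ ∘ₗ (TensorProduct.lid ℂ W).symm.toLinearMap =
      rTensor W C ∘ₗ (TensorProduct.assoc ℂ W W W).symm.toLinearMap ∘ₗ
        lTensor W δ ∘ₗ (TensorProduct.rid ℂ W).symm.toLinearMap)
    -- (id ⊗ C)(D ⊗ id) = (1-τ)⁻¹ id + (τ-1)⁻¹ δe + DC
    (h5 : lTensor W C ∘ₗ (TensorProduct.assoc ℂ W W W).toLinearMap ∘ₗ rTensor W D =
      (1 - τ)⁻¹ • LinearMap.id + (τ - 1)⁻¹ • (δ ∘ₗ e) + D ∘ₗ C)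
    -- C(id ⊗ C) = (1-τ)⁻¹ (id ⊗ e) + (τ-1)⁻¹ (e ⊗ id) + C(C ⊗ id)
    (h6 : C ∘ₗ lTensor W C ∘ₗ (TensorProduct.assoc ℂ W W W).toLinearMap =
      (1 - τ)⁻¹ • ((TensorProduct.rid ℂ W).toLinearMap ∘ₗ lTensor W e ∘ₗ
          (TensorProduct.assoc ℂ W W W).toLinearMap)
        + (τ - 1)⁻¹ • ((TensorProduct.lid ℂ W).toLinearMap ∘ₗ
            TensorProduct.map e LinearMap.id)
        + C ∘ₗ rTensor W C) :
    ∀ x y z : ℂ × W, mulA e C τ (mulA e C τ x y) z = mulA e C τ x (mulA e C τ y z) := by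

  intro x y z
  obtain ⟨a, v⟩ := x
  obtain ⟨b, w⟩ := y
  obtain ⟨c, u⟩ := z
  have he3 : e (C (v ⊗ₜ[ℂ] w) ⊗ₜ[ℂ] u) = e (v ⊗ₜ[ℂ] C (w ⊗ₜ[ℂ] u)) := by
    have := LinearMap.congr_fun h3 ((v ⊗ₜ[ℂ] w) ⊗ₜ[ℂ] u)
    simpa using this
  have hC6 : C (v ⊗ₜ[ℂ] C (w ⊗ₜ[ℂ] u)) =
      (1 - τ)⁻¹ • (e (w ⊗ₜ[ℂ] u) • v) + (τ - 1)⁻¹ • (e (v ⊗ₜ[ℂ] w) • u)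
        + C (C (v ⊗ₜ[ℂ] w) ⊗ₜ[ℂ] u) := by
    have := LinearMap.congr_fun h6 ((v ⊗ₜ[ℂ] w) ⊗ₜ[ℂ] u)
    simpa using this
  have h1τ : (1 - τ)⁻¹ = -((τ - 1)⁻¹) := by
    rw [← inv_neg]; ring_nf
  simp only [mulA, TensorProduct.add_tmul, TensorProduct.tmul_add,
    ← TensorProduct.smul_tmul', TensorProduct.tmul_smul, map_add, map_smul]
  refine Prod.ext ?_ ?_
  · simp only [smul_eq_mul]
    rw [he3]; ring
  · simp only [hC6, h1τ, smul_smul, smul_add, neg_smul]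
    module
end

section
/- In the setting of the previous statement (A = ℂ ⊕ W with product from e, C and τ ≠ 1, with τ also ≠ -1), set δ̃(1) := 1_A ⊗ 1_A + (τ-1)·δ(1) ∈ A ⊗ A. Then for every a ∈ A one has a·δ̃(1) = δ̃(1)·a in A ⊗ A (where A ⊗ A is a bimodule over A via multiplication in the left and right factor respectively). Consequently, putting r := (τ+1)^{-1} δ̃(1), the map s : A → A ⊗ A, a ↦ a·r is an A-A-bimodule map with m∘s = id_A, so A is a separable (hence semisimple) algebra. -/
open scoped TensorProduct
open TensorProduct LinearMap

/-!
Write `a = λ·1 + ι v`; since `1 = (1, 0)` is a two-sided unit only `a = ι v` matters. In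
`ι v · (ι ⊗ ι)(δ 1)` the scalar part of the product is turned by the zigzag relation
`(e ⊗ id)(id ⊗ δ) = id` into `(τ - 1)⁻¹ · 1 ⊗ ι v`, which the factor `τ - 1` of `δ̃(1)` cancels, so
`ι v · δ̃(1) = ι v ⊗ 1 + 1 ⊗ ι v + (τ - 1)(ι ⊗ ι)((C ⊗ id)(v ⊗ δ 1))`. Symmetrically
`δ̃(1) · ι v` has `(id ⊗ C)(δ 1 ⊗ v)` in the last term, and the two agree by
`(id ⊗ C)(δ ⊗ id) = (C ⊗ id)(id ⊗ δ)`. Multiplying out, `eδ = τ` and `Cδ = 0` give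
`m(δ̃(1)) = (τ + 1)·1`, while `e(C ⊗ id)(v ⊗ δ 1) = e(v ⊗ C(δ 1)) = 0` and
`C(C ⊗ id)(v ⊗ δ 1) = C(D v) = v` give `m(ι v · δ̃(1)) = (τ + 1) ι v`. The bimodule property of `s`
follows from centrality of `δ̃(1)`, as left and right multiplication on `A ⊗ A` commute.
-/

/-- The product on `A = ℂ ⊕ W`, as a bilinear map. -/
noncomputable def mulL {W : Type*} [AddCommGroup W] [Module ℂ W]
    (e : W ⊗[ℂ] W →ₗ[ℂ] ℂ) (C : W ⊗[ℂ] W →ₗ[ℂ] W) (τ : ℂ) :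
    (ℂ × W) →ₗ[ℂ] (ℂ × W) →ₗ[ℂ] (ℂ × W) :=
  LinearMap.mk₂ ℂ
    (fun x y => (x.1 * y.1 + (τ - 1)⁻¹ * e (x.2 ⊗ₜ[ℂ] y.2),
      x.1 • y.2 + y.1 • x.2 + C (x.2 ⊗ₜ[ℂ] y.2)))
    (by
      intro x x' y
      apply Prod.ext
      · simp [add_tmul]; ring
      · simp [add_tmul]; module)
    (by
      intro c x y
      apply Prod.ext
      · simp [← smul_tmul', smul_eq_mul]; ring
      · simp [← smul_tmul', smul_smul]; module)
    (by
      intro x y y'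
      apply Prod.ext
      · simp [tmul_add]; ring
      · simp [tmul_add]; module)
    (by
      intro c x y
      apply Prod.ext
      · simp [tmul_smul, smul_eq_mul]; ring
      · simp [tmul_smul, smul_smul]; module)

section

variable {W : Type*} [AddCommGroup W] [Module ℂ W]
  (e : W ⊗[ℂ] W →ₗ[ℂ] ℂ) (C : W ⊗[ℂ] W →ₗ[ℂ] W) (τ : ℂ)

lemma mulL_one_left (a : ℂ × W) : mulL e C τ (1, 0) a = a := by
  ext <;> simp [mulL]

lemma mulL_one_right (a : ℂ × W) : mulL e C τ a (1, 0) = a := by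
  ext <;> simp [mulL]

lemma mulL_inr_inr (v w : W) :
    mulL e C τ (0, v) (0, w) = ((τ - 1)⁻¹ * e (v ⊗ₜ w)) • (1, 0) + (0, C (v ⊗ₜ w)) := by
  ext <;> simp [mulL]

lemma map_mulL_inr_map_inr_inr (v : W) (t : W ⊗[ℂ] W) :
    map (mulL e C τ (inr ℂ ℂ W v)) id (map (inr ℂ ℂ W) (inr ℂ ℂ W) t) =
      (τ - 1)⁻¹ • ((1, 0) ⊗ₜ inr ℂ ℂ W
          (TensorProduct.lid ℂ W (map e id ((TensorProduct.assoc ℂ W W W).symm (v ⊗ₜ t))))) +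
        map (inr ℂ ℂ W) (inr ℂ ℂ W)
          (rTensor W C ((TensorProduct.assoc ℂ W W W).symm (v ⊗ₜ t))) := by
  induction t using TensorProduct.induction_on with
  | zero => simp [Prod.mk_zero_zero]
  | tmul x y =>
    simp only [map_tmul, assoc_symm_tmul, rTensor_tmul, inr_apply, id_coe, id_eq, mulL_inr_inr,
      TensorProduct.lid_tmul]
    rw [add_tmul, ← smul_tmul', ← Prod.smul_zero_mk, tmul_smul, mul_smul]
  | add x y hx hy =>
    simp only [tmul_add, map_add, hx, hy, smul_add]
    abel

lemma map_mulL_flip_inr_map_inr_inr (v : W) (t : W ⊗[ℂ] W) :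
    map id ((mulL e C τ).flip (inr ℂ ℂ W v)) (map (inr ℂ ℂ W) (inr ℂ ℂ W) t) =
      (τ - 1)⁻¹ • (inr ℂ ℂ W
          (TensorProduct.rid ℂ W (map id e (TensorProduct.assoc ℂ W W W (t ⊗ₜ v)))) ⊗ₜ (1, 0)) +
        map (inr ℂ ℂ W) (inr ℂ ℂ W) (lTensor W C (TensorProduct.assoc ℂ W W W (t ⊗ₜ v))) := by
  induction t using TensorProduct.induction_on with
  | zero => simp [Prod.mk_zero_zero]
  | tmul x y =>
    simp only [map_tmul, assoc_tmul, lTensor_tmul, inr_apply, id_coe, id_eq, flip_apply,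
      mulL_inr_inr, TensorProduct.rid_tmul]
    rw [tmul_add, tmul_smul, ← Prod.smul_zero_mk, ← smul_tmul', mul_smul]
  | add x y hx hy =>
    simp only [add_tmul, map_add, hx, hy, smul_add]
    abel

lemma lift_mulL_map_inr_inr (t : W ⊗[ℂ] W) :
    lift (mulL e C τ) (map (inr ℂ ℂ W) (inr ℂ ℂ W) t) = ((τ - 1)⁻¹ * e t, C t) := by
  induction t using TensorProduct.induction_on with
  | zero => simp; rfl
  | tmul v w => ext <;> simp [mulL]
  | add x y hx hy => ext <;> simp [hx, hy, mul_add]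

-- `δ̃(1)` of the paper, for `d = δ 1`.
noncomputable def deltaTilde (τ : ℂ) (d : W ⊗[ℂ] W) : (ℂ × W) ⊗[ℂ] (ℂ × W) :=
  ((1, 0) : ℂ × W) ⊗ₜ[ℂ] ((1, 0) : ℂ × W) + (τ - 1) • map (inr ℂ ℂ W) (inr ℂ ℂ W) d

variable {τ} {d : W ⊗[ℂ] W}

lemma map_mulL_inr_deltaTilde (hτ : τ ≠ 1)
    (hd : ∀ v, TensorProduct.lid ℂ W (map e id ((TensorProduct.assoc ℂ W W W).symm (v ⊗ₜ d))) = v)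
    (v : W) :
    map (mulL e C τ (inr ℂ ℂ W v)) id (deltaTilde τ d) =
      inr ℂ ℂ W v ⊗ₜ (1, 0) + (1, 0) ⊗ₜ inr ℂ ℂ W v +
        (τ - 1) • map (inr ℂ ℂ W) (inr ℂ ℂ W)
          (rTensor W C ((TensorProduct.assoc ℂ W W W).symm (v ⊗ₜ d))) := by
  rw [deltaTilde, map_add, map_smul, map_mulL_inr_map_inr_inr, hd, smul_add, smul_smul,
    mul_inv_cancel₀ (sub_ne_zero.mpr hτ), one_smul, map_tmul, mulL_one_right, id_apply, add_assoc]

lemma map_mulL_flip_inr_deltaTilde (hτ : τ ≠ 1)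
    (hd : ∀ v, TensorProduct.rid ℂ W (map id e (TensorProduct.assoc ℂ W W W (d ⊗ₜ v))) = v)
    (v : W) :
    map id ((mulL e C τ).flip (inr ℂ ℂ W v)) (deltaTilde τ d) =
      inr ℂ ℂ W v ⊗ₜ (1, 0) + (1, 0) ⊗ₜ inr ℂ ℂ W v +
        (τ - 1) • map (inr ℂ ℂ W) (inr ℂ ℂ W)
          (lTensor W C (TensorProduct.assoc ℂ W W W (d ⊗ₜ v))) := by
  rw [deltaTilde, map_add, map_smul, map_mulL_flip_inr_map_inr_inr, hd, smul_add, smul_smul,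
    mul_inv_cancel₀ (sub_ne_zero.mpr hτ), one_smul, map_tmul, flip_apply, mulL_one_left, id_apply]
  abel

lemma map_mulL_deltaTilde_comm (hτ : τ ≠ 1)
    (hl : ∀ v, TensorProduct.lid ℂ W (map e id ((TensorProduct.assoc ℂ W W W).symm (v ⊗ₜ d))) = v)
    (hr : ∀ v, TensorProduct.rid ℂ W (map id e (TensorProduct.assoc ℂ W W W (d ⊗ₜ v))) = v)
    (hC : ∀ v, lTensor W C (TensorProduct.assoc ℂ W W W (d ⊗ₜ v)) =
      rTensor W C ((TensorProduct.assoc ℂ W W W).symm (v ⊗ₜ d)))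
    (a : ℂ × W) :
    map (mulL e C τ a) id (deltaTilde τ d) = map id ((mulL e C τ).flip a) (deltaTilde τ d) := by
  have ha : a = a.1 • (1, 0) + inr ℂ ℂ W a.2 := by ext <;> simp
  have h1 : mulL e C τ (1, 0) = LinearMap.id := LinearMap.ext (mulL_one_left e C τ)
  have h1' : (mulL e C τ).flip (1, 0) = LinearMap.id := LinearMap.ext (mulL_one_right e C τ)
  rw [ha, map_add, map_smul, map_add, map_smul, map_add_left, map_smul_left, map_add_right,
    map_smul_right, h1, h1', map_id, LinearMap.add_apply, LinearMap.add_apply,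
    map_mulL_inr_deltaTilde e C hτ hl, map_mulL_flip_inr_deltaTilde e C hτ hr, hC]

lemma lift_mulL_deltaTilde (hτ : τ ≠ 1) (he : e d = τ) (hC : C d = 0) :
    lift (mulL e C τ) (deltaTilde τ d) = (τ + 1) • (1, 0) := by
  rw [deltaTilde, map_add, map_smul, lift.tmul, mulL_one_left, lift_mulL_map_inr_inr, he, hC]
  ext
  · simp [mul_inv_cancel_left₀ (sub_ne_zero.mpr hτ), add_comm]
  · simp

lemma lift_mulL_map_mulL_deltaTilde (hτ : τ ≠ 1)
    (hl : ∀ v, TensorProduct.lid ℂ W (map e id ((TensorProduct.assoc ℂ W W W).symm (v ⊗ₜ d))) = v)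
    (he : e d = τ) (hC : C d = 0)
    (heC : ∀ v, e (rTensor W C ((TensorProduct.assoc ℂ W W W).symm (v ⊗ₜ d))) = 0)
    (hCC : ∀ v, C (rTensor W C ((TensorProduct.assoc ℂ W W W).symm (v ⊗ₜ d))) = v)
    (a : ℂ × W) :
    lift (mulL e C τ) (map (mulL e C τ a) id (deltaTilde τ d)) = (τ + 1) • a := by
  have ha : a = a.1 • (1, 0) + inr ℂ ℂ W a.2 := by ext <;> simp
  have h1 : mulL e C τ (1, 0) = LinearMap.id := LinearMap.ext (mulL_one_left e C τ)
  rw [ha, map_add, map_smul, map_add_left, map_smul_left, h1, map_id, LinearMap.add_apply,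
    LinearMap.smul_apply, id_apply, map_mulL_inr_deltaTilde e C hτ hl]
  simp only [map_add, map_smul, lift_mulL_deltaTilde e C hτ he hC, lift.tmul, mulL_one_left,
    mulL_one_right, lift_mulL_map_inr_inr, heC, hCC]
  ext
  · simp [mul_comm]
  · simp only [Prod.snd_add, Prod.smul_snd, smul_zero, zero_add, inr_apply]
    module

end

theorem stmt_16_general {W : Type*} [AddCommGroup W] [Module ℂ W]
    (e : W ⊗[ℂ] W →ₗ[ℂ] ℂ) (δ : ℂ →ₗ[ℂ] W ⊗[ℂ] W)
    (C : W ⊗[ℂ] W →ₗ[ℂ] W) (D : W →ₗ[ℂ] W ⊗[ℂ] W) (τ : ℂ)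
    (hτ : τ ≠ 1) (hτ' : τ ≠ -1)
    -- (e ⊗ id)(id ⊗ δ) = id_W
    (h1 : (TensorProduct.lid ℂ W).toLinearMap ∘ₗ TensorProduct.map e LinearMap.id ∘ₗ
        (TensorProduct.assoc ℂ W W W).symm.toLinearMap ∘ₗ lTensor W δ ∘ₗ
        (TensorProduct.rid ℂ W).symm.toLinearMap = LinearMap.id)
    -- (id ⊗ e)(δ ⊗ id) = id_W
    (h2 : (TensorProduct.rid ℂ W).toLinearMap ∘ₗ TensorProduct.map LinearMap.id e ∘ₗ
        (TensorProduct.assoc ℂ W W W).toLinearMap ∘ₗ rTensor W δ ∘ₗ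
        (TensorProduct.lid ℂ W).symm.toLinearMap = LinearMap.id)
    -- D = (id ⊗ C)(δ ⊗ id)
    (hD : D = lTensor W C ∘ₗ (TensorProduct.assoc ℂ W W W).toLinearMap ∘ₗ
        rTensor W δ ∘ₗ (TensorProduct.lid ℂ W).symm.toLinearMap)
    (hCD : C ∘ₗ D = LinearMap.id)
    (heδ : e ∘ₗ δ = τ • LinearMap.id)
    (hCδ : C ∘ₗ δ = 0)
    -- e(C ⊗ id) = e(id ⊗ C)
    (h3 : e ∘ₗ rTensor W C =
      e ∘ₗ lTensor W C ∘ₗ (TensorProduct.assoc ℂ W W W).toLinearMap)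
    -- (id ⊗ C)(δ ⊗ id) = (C ⊗ id)(id ⊗ δ)
    (h4 : lTensor W C ∘ₗ (TensorProduct.assoc ℂ W W W).toLinearMap ∘ₗ
        rTensor W δ ∘ₗ (TensorProduct.lid ℂ W).symm.toLinearMap =
      rTensor W C ∘ₗ (TensorProduct.assoc ℂ W W W).symm.toLinearMap ∘ₗ
        lTensor W δ ∘ₗ (TensorProduct.rid ℂ W).symm.toLinearMap) :
    let ι : W →ₗ[ℂ] ℂ × W := LinearMap.inr ℂ ℂ W
    let dT : (ℂ × W) ⊗[ℂ] (ℂ × W) :=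
      ((1, 0) : ℂ × W) ⊗ₜ[ℂ] ((1, 0) : ℂ × W) + (τ - 1) • TensorProduct.map ι ι (δ 1)
    let s : (ℂ × W) → (ℂ × W) ⊗[ℂ] (ℂ × W) :=
      fun a => TensorProduct.map (mulL e C τ a) LinearMap.id ((τ + 1)⁻¹ • dT)
    (∀ a : ℂ × W,
        TensorProduct.map (mulL e C τ a) LinearMap.id dT =
          TensorProduct.map LinearMap.id ((mulL e C τ).flip a) dT) ∧
    (∀ a : ℂ × W, TensorProduct.lift (mulL e C τ) (s a) = a) ∧
    (∀ a b : ℂ × W,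
        TensorProduct.map (mulL e C τ a) LinearMap.id (s b) =
          TensorProduct.map LinearMap.id ((mulL e C τ).flip b) (s a)) := by
  intro ι dT s
  have hl (v : W) :
      TensorProduct.lid ℂ W (map e id ((TensorProduct.assoc ℂ W W W).symm (v ⊗ₜ δ 1))) = v := by
    simpa using LinearMap.congr_fun h1 v
  have hr (v : W) :
      TensorProduct.rid ℂ W (map id e (TensorProduct.assoc ℂ W W W (δ 1 ⊗ₜ v))) = v := by
    simpa using LinearMap.congr_fun h2 v
  have hδC (v : W) : lTensor W C (TensorProduct.assoc ℂ W W W (δ 1 ⊗ₜ v)) =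
      rTensor W C ((TensorProduct.assoc ℂ W W W).symm (v ⊗ₜ δ 1)) := by
    simpa using LinearMap.congr_fun h4 v
  have heδ1 : e (δ 1) = τ := by simpa using LinearMap.congr_fun heδ 1
  have hCδ1 : C (δ 1) = 0 := by simpa using LinearMap.congr_fun hCδ 1
  have heC (v : W) : e (rTensor W C ((TensorProduct.assoc ℂ W W W).symm (v ⊗ₜ δ 1))) = 0 := by
    simpa [hCδ1] using LinearMap.congr_fun h3 ((TensorProduct.assoc ℂ W W W).symm (v ⊗ₜ δ 1))
  have hCC (v : W) : C (rTensor W C ((TensorProduct.assoc ℂ W W W).symm (v ⊗ₜ δ 1))) = v := by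
    simpa [hD, hδC] using LinearMap.congr_fun hCD v
  have hdT : dT = deltaTilde τ (δ 1) := rfl
  have central := map_mulL_deltaTilde_comm e C hτ hl hr hδC
  refine ⟨central, fun a => ?_, fun a b => ?_⟩
  · have hτ1 : τ + 1 ≠ 0 := fun h => hτ' (eq_neg_of_add_eq_zero_left h)
    simp only [s, hdT, map_smul, lift_mulL_map_mulL_deltaTilde e C hτ hl heδ1 hCδ1 heC hCC a,
      smul_smul, inv_mul_cancel₀ hτ1, one_smul]
  · simp only [s, map_smul, hdT, central b, map_map, comp_id, id_comp]

/-- With `τ ≠ ±1`, the element `δ̃(1) = 1_A ⊗ 1_A + (τ-1)·(ι⊗ι)(δ(1))` of `A ⊗ A` is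
central for the bimodule structure (`a·δ̃(1) = δ̃(1)·a`), and `s(a) := a·(τ+1)⁻¹δ̃(1)`
is an `A`-`A`-bimodule map with `m ∘ s = id_A`, so `A` is separable. -/
theorem stmt_16 {W : Type*} [AddCommGroup W] [Module ℂ W] [FiniteDimensional ℂ W]
    (e : W ⊗[ℂ] W →ₗ[ℂ] ℂ) (δ : ℂ →ₗ[ℂ] W ⊗[ℂ] W)
    (C : W ⊗[ℂ] W →ₗ[ℂ] W) (D : W →ₗ[ℂ] W ⊗[ℂ] W) (τ : ℂ)
    (hτ : τ ≠ 1) (hτ' : τ ≠ -1)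
    -- (e ⊗ id)(id ⊗ δ) = id_W
    (h1 : (TensorProduct.lid ℂ W).toLinearMap ∘ₗ TensorProduct.map e LinearMap.id ∘ₗ
        (TensorProduct.assoc ℂ W W W).symm.toLinearMap ∘ₗ lTensor W δ ∘ₗ
        (TensorProduct.rid ℂ W).symm.toLinearMap = LinearMap.id)
    -- (id ⊗ e)(δ ⊗ id) = id_W
    (h2 : (TensorProduct.rid ℂ W).toLinearMap ∘ₗ TensorProduct.map LinearMap.id e ∘ₗ
        (TensorProduct.assoc ℂ W W W).toLinearMap ∘ₗ rTensor W δ ∘ₗ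
        (TensorProduct.lid ℂ W).symm.toLinearMap = LinearMap.id)
    -- D = (id ⊗ C)(δ ⊗ id)
    (hD : D = lTensor W C ∘ₗ (TensorProduct.assoc ℂ W W W).toLinearMap ∘ₗ
        rTensor W δ ∘ₗ (TensorProduct.lid ℂ W).symm.toLinearMap)
    (hCD : C ∘ₗ D = LinearMap.id)
    (heδ : e ∘ₗ δ = τ • LinearMap.id)
    (hCδ : C ∘ₗ δ = 0)
    (heD : e ∘ₗ D = 0)
    -- e(C ⊗ id) = e(id ⊗ C)
    (h3 : e ∘ₗ rTensor W C =
      e ∘ₗ lTensor W C ∘ₗ (TensorProduct.assoc ℂ W W W).toLinearMap)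
    -- (id ⊗ C)(δ ⊗ id) = (C ⊗ id)(id ⊗ δ)
    (h4 : lTensor W C ∘ₗ (TensorProduct.assoc ℂ W W W).toLinearMap ∘ₗ
        rTensor W δ ∘ₗ (TensorProduct.lid ℂ W).symm.toLinearMap =
      rTensor W C ∘ₗ (TensorProduct.assoc ℂ W W W).symm.toLinearMap ∘ₗ
        lTensor W δ ∘ₗ (TensorProduct.rid ℂ W).symm.toLinearMap) :
    let ι : W →ₗ[ℂ] ℂ × W := LinearMap.inr ℂ ℂ W
    let dT : (ℂ × W) ⊗[ℂ] (ℂ × W) :=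
      ((1, 0) : ℂ × W) ⊗ₜ[ℂ] ((1, 0) : ℂ × W) + (τ - 1) • TensorProduct.map ι ι (δ 1)
    let s : (ℂ × W) → (ℂ × W) ⊗[ℂ] (ℂ × W) :=
      fun a => TensorProduct.map (mulL e C τ a) LinearMap.id ((τ + 1)⁻¹ • dT)
    (∀ a : ℂ × W,
        TensorProduct.map (mulL e C τ a) LinearMap.id dT =
          TensorProduct.map LinearMap.id ((mulL e C τ).flip a) dT) ∧
    (∀ a : ℂ × W, TensorProduct.lift (mulL e C τ) (s a) = a) ∧
    (∀ a b : ℂ × W,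
        TensorProduct.map (mulL e C τ a) LinearMap.id (s b) =
          TensorProduct.map LinearMap.id ((mulL e C τ).flip b) (s a)) :=
  stmt_16_general e δ C D τ hτ hτ' h1 h2 hD hCD heδ hCδ h3 h4
end
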